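/- arXiv:1809.06084 — 7 statements merged into one kernel-verified Lean document; each statement's English description precedes it below -/
import Mathlib

section
/- For positive integers k and m with k ≤ m, the double sum over t from 0 to m and j from 0 to 2k of C(4k, 2j)·C(4m−4k+1, 4t−2j+1) equals 2^(4m−2) + (−1)^m · 2^(2m−1). -/
/-- Binomial coefficient with integer lower index, zero when the index is negative. -/
def C (n : ℕ) (k : ℤ) : ℤ := if 0 ≤ k then (n.choose k.toNat : ℤ) else 0

open Finset

lemma C_cast (n s : ℕ) : C n ((s : ℤ)) = (n.choose s : ℤ) := by
  simp [C]

lemma C_neg (n : ℕ) (z : ℤ) (h : z < 0) : C n z = 0 := by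
  simp [C, not_le.mpr h]

/-- Sum of binomial coefficients over an arithmetic progression mod 4. -/
def S (r M : ℕ) : ℤ := ∑ t ∈ range (M + 1), (M.choose (4 * t + r) : ℤ)

lemma sum_eq_S (r M n : ℕ) (h : M < 4 * n + r) :
    ∑ t ∈ range n, (M.choose (4 * t + r) : ℤ) = S r M := by
  have key : ∀ a b : ℕ, M < 4 * a + r → a ≤ b →
      ∑ t ∈ range b, (M.choose (4 * t + r) : ℤ)
        = ∑ t ∈ range a, (M.choose (4 * t + r) : ℤ) := by
    intro a b ha hab
    symm
    apply Finset.sum_subset (Finset.range_subset_range.2 hab)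
    intro t _ ht
    simp only [Finset.mem_range, not_lt] at ht
    have : M < 4 * t + r := by omega
    rw [Nat.choose_eq_zero_of_lt this]
    simp
  rw [show (∑ t ∈ range n, (M.choose (4 * t + r) : ℤ))
      = ∑ t ∈ range (n + (M + 1)), (M.choose (4 * t + r) : ℤ) from
      (key n (n + (M + 1)) h (by omega)).symm,
    key (M + 1) (n + (M + 1)) (by omega) (by omega)]
  rfl

lemma S_succ (r M : ℕ) : S (r + 1) (M + 1) = S (r + 1) M + S r M := by
  rw [← sum_eq_S (r + 1) M (M + 2) (by omega), ← sum_eq_S r M (M + 2) (by omega),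
    ← Finset.sum_add_distrib]
  show ∑ t ∈ range (M + 2), ((M + 1).choose (4 * t + (r + 1)) : ℤ) = _
  apply Finset.sum_congr rfl
  intro t _
  have h : 4 * t + (r + 1) = (4 * t + r) + 1 := by ring
  rw [h, Nat.choose_succ_succ]
  push_cast
  ring

lemma S1_succ (M : ℕ) : S 1 (M + 1) = S 1 M + S 0 M := S_succ 0 M
lemma S2_succ (M : ℕ) : S 2 (M + 1) = S 2 M + S 1 M := S_succ 1 M
lemma S3_succ (M : ℕ) : S 3 (M + 1) = S 3 M + S 2 M := S_succ 2 M

lemma S0_succ (M : ℕ) : S 0 (M + 1) = S 0 M + S 3 M := by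
  have h1 : S 0 (M + 1)
      = ∑ t ∈ range (M + 1), ((M + 1).choose (4 * (t + 1) + 0) : ℤ)
        + ((M + 1).choose (4 * 0 + 0) : ℤ) := by
    show ∑ t ∈ range (M + 2), ((M + 1).choose (4 * t + 0) : ℤ) = _
    exact Finset.sum_range_succ' _ (M + 1)
  have h2 : ∑ t ∈ range (M + 2), (M.choose (4 * t + 0) : ℤ)
      = ∑ t ∈ range (M + 1), (M.choose (4 * (t + 1) + 0) : ℤ)
        + (M.choose (4 * 0 + 0) : ℤ) := Finset.sum_range_succ' _ (M + 1)
  rw [← sum_eq_S 0 M (M + 2) (by omega)] at *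
  rw [h1, h2, ← sum_eq_S 3 M (M + 1) (by omega)]
  have : ∀ t ∈ range (M + 1),
      ((M + 1).choose (4 * (t + 1) + 0) : ℤ)
        = (M.choose (4 * (t + 1) + 0) : ℤ) + (M.choose (4 * t + 3) : ℤ) := by
    intro t _
    have h : 4 * (t + 1) + 0 = (4 * t + 3) + 1 := by ring
    rw [h, Nat.choose_succ_succ]
    push_cast
    ring
  rw [Finset.sum_congr rfl this, Finset.sum_add_distrib]
  simp
  ring

lemma S_closed (n : ℕ) :
    S 0 (4 * (n + 1)) = 2 ^ (4 * n + 2) + (-1) ^ (n + 1) * 2 ^ (2 * n + 1) ∧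
    S 1 (4 * (n + 1)) = 2 ^ (4 * n + 2) ∧
    S 2 (4 * (n + 1)) = 2 ^ (4 * n + 2) - (-1) ^ (n + 1) * 2 ^ (2 * n + 1) ∧
    S 3 (4 * (n + 1)) = 2 ^ (4 * n + 2) := by
  induction n with
  | zero =>
      refine ⟨?_, ?_, ?_, ?_⟩ <;>
        simp [S, Finset.sum_range_succ] <;> decide
  | succ n ih =>
      obtain ⟨h0, h1, h2, h3⟩ := ih
      have e : 4 * (n + 1 + 1) = 4 * (n + 1) + 1 + 1 + 1 + 1 := by ring
      refine ⟨?_, ?_, ?_, ?_⟩ <;>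
        · rw [e]
          simp only [S0_succ, S1_succ, S2_succ, S3_succ, h0, h1, h2, h3]
          ring

lemma S1_odd (n : ℕ) :
    S 1 (4 * (n + 1) + 1) = 2 ^ (4 * n + 3) + (-1) ^ (n + 1) * 2 ^ (2 * n + 1) := by
  obtain ⟨h0, h1, _, _⟩ := S_closed n
  rw [S1_succ, h0, h1]; ring

lemma S3_odd (n : ℕ) :
    S 3 (4 * (n + 1) + 1) = 2 ^ (4 * n + 3) - (-1) ^ (n + 1) * 2 ^ (2 * n + 1) := by
  obtain ⟨h0, h1, h2, h3⟩ := S_closed n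
  rw [S3_succ, h3, h2]; ring

lemma S1_one : S 1 1 = 1 := by decide
lemma S3_one : S 3 1 = 0 := by decide

lemma sum_split_parity (f : ℕ → ℤ) (k : ℕ) :
    ∑ j ∈ range (2 * k + 1), f j
      = ∑ a ∈ range (k + 1), f (2 * a) + ∑ a ∈ range k, f (2 * a + 1) := by
  induction k with
  | zero => simp
  | succ k ih =>
      have e : 2 * (k + 1) + 1 = (2 * k + 1) + 1 + 1 := by ring
      rw [e, Finset.sum_range_succ, Finset.sum_range_succ, ih,
        Finset.sum_range_succ (fun a => f (2 * a)) (k + 1),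
        Finset.sum_range_succ (fun a => f (2 * a + 1)) k]
      have e1 : 2 * (k + 1) = 2 * k + 1 + 1 := by ring
      rw [e1]
      ring

lemma sum_shift (g : ℕ → ℤ) (a b : ℕ) :
    ∑ t ∈ range (a + b), g t = ∑ t ∈ range a, g t + ∑ t ∈ range b, g (a + t) := by
  induction b with
  | zero => simp
  | succ b ih => rw [show a + (b + 1) = (a + b) + 1 from rfl, Finset.sum_range_succ, ih,
      Finset.sum_range_succ]; ring

lemma inner_even (m k a : ℕ) (ha : a ≤ k) (hkm : k ≤ m) :
    ∑ t ∈ range (m + 1), C (4 * (m - k) + 1) (4 * (t : ℤ) - 2 * (2 * a) + 1)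
      = S 1 (4 * (m - k) + 1) := by
  have e : m + 1 = a + (m + 1 - a) := by omega
  rw [e, sum_shift]
  have hz : ∀ t ∈ range a, C (4 * (m - k) + 1) (4 * (t : ℤ) - 2 * (2 * a) + 1) = 0 := by
    intro t ht
    simp only [Finset.mem_range] at ht
    apply C_neg
    have : (t : ℤ) < a := by exact_mod_cast ht
    omega
  rw [Finset.sum_congr rfl hz, Finset.sum_const_zero, zero_add]
  have h2 : ∀ t ∈ range (m + 1 - a),
      C (4 * (m - k) + 1) (4 * ((a + t : ℕ) : ℤ) - 2 * (2 * a) + 1)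
        = ((4 * (m - k) + 1).choose (4 * t + 1) : ℤ) := by
    intro t _
    have harg : 4 * ((a + t : ℕ) : ℤ) - 2 * (2 * a) + 1 = ((4 * t + 1 : ℕ) : ℤ) := by
      push_cast; ring
    rw [harg, C_cast]
  rw [Finset.sum_congr rfl h2]
  exact sum_eq_S 1 (4 * (m - k) + 1) (m + 1 - a) (by omega)

lemma inner_odd (m k a : ℕ) (ha : a < k) (hkm : k ≤ m) :
    ∑ t ∈ range (m + 1), C (4 * (m - k) + 1) (4 * (t : ℤ) - 2 * (2 * a + 1) + 1)
      = S 3 (4 * (m - k) + 1) := by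
  have e : m + 1 = (a + 1) + (m - a) := by omega
  rw [e, sum_shift]
  have hz : ∀ t ∈ range (a + 1),
      C (4 * (m - k) + 1) (4 * (t : ℤ) - 2 * (2 * a + 1) + 1) = 0 := by
    intro t ht
    simp only [Finset.mem_range] at ht
    apply C_neg
    have : (t : ℤ) < a + 1 := by exact_mod_cast ht
    omega
  rw [Finset.sum_congr rfl hz, Finset.sum_const_zero, zero_add]
  have h2 : ∀ t ∈ range (m - a),
      C (4 * (m - k) + 1) (4 * (((a + 1) + t : ℕ) : ℤ) - 2 * (2 * a + 1) + 1)
        = ((4 * (m - k) + 1).choose (4 * t + 3) : ℤ) := by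
    intro t _
    have harg : 4 * (((a + 1) + t : ℕ) : ℤ) - 2 * (2 * a + 1) + 1
        = ((4 * t + 3 : ℕ) : ℤ) := by push_cast; ring
    rw [harg, C_cast]
  rw [Finset.sum_congr rfl h2]
  exact sum_eq_S 3 (4 * (m - k) + 1) (m - a) (by omega)

theorem stmt_9 (k m : ℕ) (hk : 0 < k) (hm : 0 < m) (hkm : k ≤ m) :
    (∑ t ∈ Finset.range (m + 1), ∑ j ∈ Finset.range (2 * k + 1),
        C (4 * k) (2 * j) * C (4 * m - 4 * k + 1) (4 * (t : ℤ) - 2 * j + 1)) =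
      2 ^ (4 * m - 2) + (-1) ^ m * 2 ^ (2 * m - 1) := by
  have hN : 4 * m - 4 * k + 1 = 4 * (m - k) + 1 := by omega
  rw [hN, Finset.sum_comm]
  have step1 : ∀ j : ℕ,
      ∑ t ∈ range (m + 1), C (4 * k) (2 * (j : ℤ))
          * C (4 * (m - k) + 1) (4 * (t : ℤ) - 2 * j + 1)
        = C (4 * k) (2 * (j : ℤ))
          * ∑ t ∈ range (m + 1), C (4 * (m - k) + 1) (4 * (t : ℤ) - 2 * j + 1) := by
    intro j
    rw [Finset.mul_sum]
  rw [Finset.sum_congr rfl fun j _ => step1 j]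
  rw [sum_split_parity (fun j => C (4 * k) (2 * (j : ℤ))
    * ∑ t ∈ range (m + 1), C (4 * (m - k) + 1) (4 * (t : ℤ) - 2 * j + 1)) k]
  have heven : ∀ a ∈ range (k + 1),
      C (4 * k) (2 * ((2 * a : ℕ) : ℤ))
          * ∑ t ∈ range (m + 1), C (4 * (m - k) + 1) (4 * (t : ℤ) - 2 * (2 * a : ℕ) + 1)
        = ((4 * k).choose (4 * a + 0) : ℤ) * S 1 (4 * (m - k) + 1) := by
    intro a ha
    simp only [Finset.mem_range] at ha
    have h1 : (2 * ((2 * a : ℕ) : ℤ)) = ((4 * a + 0 : ℕ) : ℤ) := by push_cast; ring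
    have h2 : ∀ t ∈ range (m + 1),
        C (4 * (m - k) + 1) (4 * (t : ℤ) - 2 * ((2 * a : ℕ) : ℤ) + 1)
          = C (4 * (m - k) + 1) (4 * (t : ℤ) - 2 * (2 * (a : ℤ)) + 1) := by
      intro t _; congr 1
    rw [Finset.sum_congr rfl h2, inner_even m k a (by omega) hkm, h1]
    rfl
  have hodd : ∀ a ∈ range k,
      C (4 * k) (2 * ((2 * a + 1 : ℕ) : ℤ))
          * ∑ t ∈ range (m + 1), C (4 * (m - k) + 1) (4 * (t : ℤ) - 2 * (2 * a + 1 : ℕ) + 1)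
        = ((4 * k).choose (4 * a + 2) : ℤ) * S 3 (4 * (m - k) + 1) := by
    intro a ha
    simp only [Finset.mem_range] at ha
    have h1 : (2 * ((2 * a + 1 : ℕ) : ℤ)) = ((4 * a + 2 : ℕ) : ℤ) := by push_cast; ring
    have h2 : ∀ t ∈ range (m + 1),
        C (4 * (m - k) + 1) (4 * (t : ℤ) - 2 * ((2 * a + 1 : ℕ) : ℤ) + 1)
          = C (4 * (m - k) + 1) (4 * (t : ℤ) - 2 * (2 * (a : ℤ) + 1) + 1) := by
      intro t _; congr 1
    rw [Finset.sum_congr rfl h2, inner_odd m k a ha hkm, h1]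
    rfl
  rw [Finset.sum_congr rfl heven, Finset.sum_congr rfl hodd]
  rw [← Finset.sum_mul, ← Finset.sum_mul]
  rw [sum_eq_S 0 (4 * k) (k + 1) (by omega), sum_eq_S 2 (4 * k) k (by omega)]
  -- now: S 0 (4k) * S 1 N + S 2 (4k) * S 3 N = RHS
  obtain ⟨K, rfl⟩ : ∃ K, k = K + 1 := ⟨k - 1, by omega⟩
  obtain ⟨c0, c1, c2, c3⟩ := S_closed K
  rcases Nat.eq_or_lt_of_le hkm with heq | hlt
  · -- m = k
    subst heq
    simp only [Nat.sub_self, Nat.mul_zero, Nat.zero_add] at *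
    rw [S1_one, S3_one, c0, c2]
    have e1 : 4 * (K + 1) - 2 = 4 * K + 2 := by omega
    have e2 : 2 * (K + 1) - 1 = 2 * K + 1 := by omega
    rw [e1, e2]
    ring
  · -- k < m
    obtain ⟨D, hD⟩ : ∃ D, m - (K + 1) = D + 1 := ⟨m - K - 2, by omega⟩
    rw [hD, S1_odd D, S3_odd D, c0, c2]
    have hmm : m = K + D + 2 := by omega
    subst hmm
    have e1 : 4 * (K + D + 2) - 2 = 4 * K + 4 * D + 6 := by omega
    have e2 : 2 * (K + D + 2) - 1 = 2 * K + 2 * D + 3 := by omega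
    rw [e1, e2]
    ring
end

section
/- For positive integers k and m with k ≤ m, the double sum over t from 0 to m and j from 0 to 2k of C(4k, 2j)·C(4m−4k+3, 4t−2j+1) equals 2^(4m) + (−1)^m · 2^(2m). -/
open Finset

local notation "I" => (Zsqrtd.sqrtd : GaussianInt)

private lemma I_sq : I ^ 2 = -1 := by decide

private lemma I_pow_four : I ^ 4 = 1 := by decide

private lemma I_pow_mod (r : ℕ) : I ^ r = I ^ (r % 4) := by
  conv_lhs => rw [← Nat.div_add_mod r 4]
  rw [pow_add, pow_mul, I_pow_four, one_pow, one_mul]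

private lemma sum4 (r : ℕ) :
    (∑ u ∈ range 4, (I ^ r) ^ u) = if r % 4 = 0 then 4 else 0 := by
  rw [I_pow_mod r]
  have h : r % 4 = 0 ∨ r % 4 = 1 ∨ r % 4 = 2 ∨ r % 4 = 3 := by omega
  rcases h with h | h | h | h <;> rw [h] <;> decide

private lemma filter8 (a b : ℕ) :
    (1 + (-1 : GaussianInt) ^ a) * ∑ u ∈ range 4, (I ^ (a + b + 3)) ^ u =
      if a % 2 = 0 ∧ (a + b + 3) % 4 = 0 then 8 else 0 := by
  rw [sum4]
  by_cases ha : a % 2 = 0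
  · have hae : Even a := Nat.even_iff.mpr ha
    rw [hae.neg_one_pow]
    by_cases hb : (a + b + 3) % 4 = 0 <;> simp [ha, hb] <;> norm_num
  · have hao : Odd a := Nat.odd_iff.mpr (by omega)
    rw [hao.neg_one_pow]
    simp [ha]

private lemma expand_cube (c : GaussianInt) (n1 n2 : ℕ) :
    c ^ 3 * (c + 1) ^ n2 * ((c + 1) ^ n1 + (-c + 1) ^ n1) =
      ∑ a ∈ range (n1 + 1), ∑ b ∈ range (n2 + 1),
        ((n1.choose a : GaussianInt) * (n2.choose b)) *
          ((1 + (-1) ^ a) * c ^ (a + b + 3)) := by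
  rw [add_pow c 1 n2, add_pow c 1 n1, add_pow (-c) 1 n1, ← Finset.sum_add_distrib]
  rw [mul_assoc, Finset.sum_mul_sum]
  simp only [Finset.mul_sum]
  rw [Finset.sum_comm]
  refine Finset.sum_congr rfl fun a _ => Finset.sum_congr rfl fun b _ => ?_
  rw [neg_pow c a]
  ring

private lemma L1 (n1 n2 : ℕ) :
    (∑ u ∈ range 4, (I ^ u) ^ 3 * (I ^ u + 1) ^ n2 *
        ((I ^ u + 1) ^ n1 + (-(I ^ u) + 1) ^ n1)) =
      ∑ a ∈ range (n1 + 1), ∑ b ∈ range (n2 + 1),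
        ((n1.choose a : GaussianInt) * (n2.choose b)) *
          (if a % 2 = 0 ∧ (a + b + 3) % 4 = 0 then 8 else 0) := by
  have h : ∀ u ∈ range 4, (I ^ u) ^ 3 * (I ^ u + 1) ^ n2 *
      ((I ^ u + 1) ^ n1 + (-(I ^ u) + 1) ^ n1) =
      ∑ a ∈ range (n1 + 1), ∑ b ∈ range (n2 + 1),
        ((n1.choose a : GaussianInt) * (n2.choose b)) *
          ((1 + (-1) ^ a) * (I ^ u) ^ (a + b + 3)) := fun u _ => expand_cube (I ^ u) n1 n2
  rw [Finset.sum_congr rfl h, Finset.sum_comm]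
  refine Finset.sum_congr rfl fun a _ => ?_
  rw [Finset.sum_comm]
  refine Finset.sum_congr rfl fun b _ => ?_
  rw [← filter8 a b, Finset.mul_sum, Finset.mul_sum]
  refine Finset.sum_congr rfl fun u _ => ?_
  rw [← pow_mul, mul_comm u (a + b + 3), pow_mul]

private lemma L2 (k m : ℕ) (hk : 0 < k) (hkm : k ≤ m) :
    (∑ u ∈ range 4, (I ^ u) ^ 3 * (I ^ u + 1) ^ (4 * (m - k) + 3) *
        ((I ^ u + 1) ^ (4 * k) + (-(I ^ u) + 1) ^ (4 * k))) =
      2 ^ (4 * m + 3) + 8 * (-4) ^ m := by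
  have hI3 : I ^ 3 = -I := by decide
  have hp4 : ((I : GaussianInt) + 1) ^ 4 = -4 := by decide
  have hm4 : ((-I : GaussianInt) + 1) ^ 4 = -4 := by decide
  -- expand the sum over range 4
  rw [show (4 : ℕ) = 3 + 1 from rfl, Finset.sum_range_succ, Finset.sum_range_succ,
    Finset.sum_range_succ, Finset.sum_range_succ, Finset.sum_range_zero]
  have e0 : (I ^ 0) ^ 3 * (I ^ 0 + 1) ^ (4 * (m - k) + 3) *
      ((I ^ 0 + 1) ^ (4 * k) + (-(I ^ 0) + 1) ^ (4 * k)) = 2 ^ (4 * m + 3) := by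
    have h4k : 4 * k ≠ 0 := by omega
    rw [pow_zero]
    rw [show ((1 : GaussianInt) + 1) = 2 from by norm_num,
      show (-(1 : GaussianInt) + 1) = 0 from by ring, zero_pow h4k, add_zero,
      one_pow, one_mul, ← pow_add]
    congr 1
    omega
  have e2 : (I ^ 2) ^ 3 * (I ^ 2 + 1) ^ (4 * (m - k) + 3) *
      ((I ^ 2 + 1) ^ (4 * k) + (-(I ^ 2) + 1) ^ (4 * k)) = 0 := by
    rw [I_sq, show (-1 : GaussianInt) + 1 = 0 from by ring, zero_pow (by omega), mul_zero,
      zero_mul]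
  have hplus : ((I : GaussianInt) + 1) ^ (4 * (m - k) + 3) = (-4) ^ (m - k) * (I + 1) ^ 3 := by
    rw [pow_add, pow_mul, hp4]
  have hminus : ((-I : GaussianInt) + 1) ^ (4 * (m - k) + 3) = (-4) ^ (m - k) * (-I + 1) ^ 3 := by
    rw [pow_add, pow_mul, hm4]
  have hplus' : ((I : GaussianInt) + 1) ^ (4 * k) = (-4) ^ k := by rw [pow_mul, hp4]
  have hminus' : ((-I : GaussianInt) + 1) ^ (4 * k) = (-4) ^ k := by rw [pow_mul, hm4]
  have hmk : (-4 : GaussianInt) ^ (m - k) * (-4) ^ k = (-4) ^ m := by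
    rw [← pow_add]
    congr 1
    omega
  have e1 : (I ^ 1) ^ 3 * (I ^ 1 + 1) ^ (4 * (m - k) + 3) *
      ((I ^ 1 + 1) ^ (4 * k) + (-(I ^ 1) + 1) ^ (4 * k)) = (4 + 4 * I) * (-4) ^ m := by
    rw [pow_one, hplus, hplus', hminus']
    have : I ^ 3 * (I + 1) ^ 3 * 2 = 4 + 4 * I := by decide
    calc I ^ 3 * ((-4) ^ (m - k) * (I + 1) ^ 3) * ((-4) ^ k + (-4) ^ k)
        = (I ^ 3 * (I + 1) ^ 3 * 2) * ((-4) ^ (m - k) * (-4) ^ k) := by ring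
      _ = (4 + 4 * I) * (-4) ^ m := by rw [this, hmk]
  have e3 : (I ^ 3) ^ 3 * (I ^ 3 + 1) ^ (4 * (m - k) + 3) *
      ((I ^ 3 + 1) ^ (4 * k) + (-(I ^ 3) + 1) ^ (4 * k)) = (4 - 4 * I) * (-4) ^ m := by
    rw [hI3, neg_neg]
    rw [show ((-I : GaussianInt) + 1) ^ (4 * (m - k) + 3) = (-4) ^ (m - k) * (-I + 1) ^ 3 from
      hminus, hminus', hplus']
    have : (-I) ^ 3 * (-I + 1) ^ 3 * 2 = 4 - 4 * I := by decide
    calc (-I) ^ 3 * ((-4) ^ (m - k) * (-I + 1) ^ 3) * ((-4) ^ k + (-4) ^ k)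
        = ((-I) ^ 3 * (-I + 1) ^ 3 * 2) * ((-4) ^ (m - k) * (-4) ^ k) := by ring
      _ = (4 - 4 * I) * (-4) ^ m := by rw [this, hmk]
  rw [e0, e1, e2, e3]
  ring

private lemma reindex (k m : ℕ) (hk : 0 < k) (hkm : k ≤ m) :
    (∑ t ∈ Finset.range (m + 1), ∑ j ∈ Finset.range (2 * k + 1),
        C (4 * k) (2 * j) * C (4 * (m - k) + 3) (4 * (t : ℤ) - 2 * j + 1)) =
      ∑ a ∈ range (4 * k + 1), ∑ b ∈ range (4 * (m - k) + 3 + 1),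
        (((4 * k).choose a : ℤ) * ((4 * (m - k) + 3).choose b)) *
          (if a % 2 = 0 ∧ (a + b + 3) % 4 = 0 then 1 else 0) := by
  set n2 := 4 * (m - k) + 3 with hn2
  rw [← Finset.sum_product', ← Finset.sum_product']
  have e1 : (∑ p ∈ range (m + 1) ×ˢ range (2 * k + 1),
      C (4 * k) (2 * (p.2 : ℤ)) * C n2 (4 * (p.1 : ℤ) - 2 * p.2 + 1)) =
      ∑ p ∈ (range (m + 1) ×ˢ range (2 * k + 1)).filter
        (fun p => 2 * p.2 ≤ 4 * p.1 + 1 ∧ 4 * p.1 + 1 - 2 * p.2 ≤ n2),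
        C (4 * k) (2 * (p.2 : ℤ)) * C n2 (4 * (p.1 : ℤ) - 2 * p.2 + 1) := by
    refine (Finset.sum_filter_of_ne fun p _ hne => ?_).symm
    by_contra hcon
    push_neg at hcon
    apply hne
    by_cases h1 : 2 * p.2 ≤ 4 * p.1 + 1
    · have h2 : n2 < 4 * p.1 + 1 - 2 * p.2 := hcon h1
      have : C n2 (4 * (p.1 : ℤ) - 2 * p.2 + 1) = 0 := by
        unfold C
        rw [if_pos (by push_cast; omega)]
        rw [show (4 * (p.1 : ℤ) - 2 * p.2 + 1).toNat = 4 * p.1 + 1 - 2 * p.2 from by omega]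
        rw [Nat.choose_eq_zero_of_lt h2]
        norm_num
      rw [this, mul_zero]
    · have : C n2 (4 * (p.1 : ℤ) - 2 * p.2 + 1) = 0 := by
        unfold C
        rw [if_neg (by push_cast; omega)]
      rw [this, mul_zero]
  have e2 : (∑ q ∈ range (4 * k + 1) ×ˢ range (n2 + 1),
      (((4 * k).choose q.1 : ℤ) * (n2.choose q.2)) *
        (if q.1 % 2 = 0 ∧ (q.1 + q.2 + 3) % 4 = 0 then 1 else 0)) =
      ∑ q ∈ (range (4 * k + 1) ×ˢ range (n2 + 1)).filter
        (fun q => q.1 % 2 = 0 ∧ (q.1 + q.2 + 3) % 4 = 0),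
        (((4 * k).choose q.1 : ℤ) * (n2.choose q.2)) := by
    rw [Finset.sum_filter]
    refine Finset.sum_congr rfl fun q _ => ?_
    split_ifs <;> simp
  rw [e1, e2]
  refine Finset.sum_nbij' (fun p => (2 * p.2, 4 * p.1 + 1 - 2 * p.2))
    (fun q => ((q.1 + q.2 - 1) / 4, q.1 / 2)) ?_ ?_ ?_ ?_ ?_
  · intro p hp
    simp only [Finset.mem_filter, Finset.mem_product, Finset.mem_range] at hp ⊢
    omega
  · intro q hq
    simp only [Finset.mem_filter, Finset.mem_product, Finset.mem_range] at hq ⊢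
    omega
  · intro p hp
    simp only [Finset.mem_filter, Finset.mem_product, Finset.mem_range] at hp
    simp only [Prod.ext_iff]
    constructor <;> omega
  · intro q hq
    simp only [Finset.mem_filter, Finset.mem_product, Finset.mem_range] at hq
    simp only [Prod.ext_iff]
    constructor <;> omega
  · intro p hp
    simp only [Finset.mem_filter, Finset.mem_product, Finset.mem_range] at hp
    obtain ⟨⟨ht, hj⟩, h1, h2⟩ := hp
    unfold C
    rw [if_pos (by positivity), if_pos (by push_cast; omega)]
    rw [show (2 * (p.2 : ℤ)).toNat = 2 * p.2 from by omega,
      show (4 * (p.1 : ℤ) - 2 * p.2 + 1).toNat = 4 * p.1 + 1 - 2 * p.2 from by omega]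

theorem stmt_13 (k m : ℕ) (hk : 0 < k) (hm : 0 < m) (hkm : k ≤ m) :
    (∑ t ∈ Finset.range (m + 1), ∑ j ∈ Finset.range (2 * k + 1),
        C (4 * k) (2 * j) * C (4 * m - 4 * k + 3) (4 * (t : ℤ) - 2 * j + 1)) =
      2 ^ (4 * m) + (-1) ^ m * 2 ^ (2 * m) := by
  have hn : 4 * m - 4 * k + 3 = 4 * (m - k) + 3 := by omega
  rw [hn, reindex k m hk hkm]
  -- cast to GaussianInt
  apply Int.cast_injective (α := GaussianInt)
  push_cast [apply_ite (Int.cast : ℤ → GaussianInt)]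
  apply mul_left_cancel₀ (show (8 : GaussianInt) ≠ 0 from by decide)
  have lhs8 : (8 : GaussianInt) * ∑ a ∈ range (4 * k + 1), ∑ b ∈ range (4 * (m - k) + 3 + 1),
      (((4 * k).choose a : GaussianInt) * ((4 * (m - k) + 3).choose b)) *
        (if a % 2 = 0 ∧ (a + b + 3) % 4 = 0 then 1 else 0) =
      ∑ a ∈ range (4 * k + 1), ∑ b ∈ range (4 * (m - k) + 3 + 1),
      (((4 * k).choose a : GaussianInt) * ((4 * (m - k) + 3).choose b)) *
        (if a % 2 = 0 ∧ (a + b + 3) % 4 = 0 then 8 else 0) := by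
    rw [Finset.mul_sum]
    refine Finset.sum_congr rfl fun a _ => ?_
    rw [Finset.mul_sum]
    refine Finset.sum_congr rfl fun b _ => ?_
    split_ifs <;> ring
  rw [lhs8, ← L1 (4 * k) (4 * (m - k) + 3), L2 k m hk hkm]
  have h4 : (-4 : GaussianInt) ^ m = (-1) ^ m * 2 ^ (2 * m) := by
    rw [show (-4 : GaussianInt) = -1 * 2 ^ 2 from by norm_num, mul_pow, ← pow_mul, mul_comm 2 m]
  rw [h4]
  ring
end

section
/- For positive integers k and m with k ≤ m, twice the double sum over t from 0 to m and j from 0 to 2k of C(4k+1, 2j)·C(4m−4k+1, 4t−2j) equals 2^(4m) + (−1)^m · 2^(2m). -/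
open Finset Complex

lemma C_ne_zero {n : ℕ} {x : ℤ} (h : C n x ≠ 0) : 0 ≤ x ∧ x ≤ n := by
  unfold C at h
  split_ifs at h with h0
  · refine ⟨h0, ?_⟩
    by_contra hlt
    push_neg at hlt
    have hx : n < x.toNat := by omega
    simp [Nat.choose_eq_zero_of_lt hx] at h
  · simp at h

lemma C_eval {n : ℕ} {x : ℤ} (h0 : 0 ≤ x) : C n x = (n.choose x.toNat : ℤ) := if_pos h0

lemma expand' (n : ℕ) (c : ℂ) : (1+c)^n = ∑ i ∈ Finset.range (n+1), (n.choose i : ℂ) * c^i := by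
  rw [add_comm, add_pow]
  exact Finset.sum_congr rfl fun i _ => by ring

lemma epow (i : ℕ) : (1:ℂ) + (-1)^i = if Even i then 2 else 0 := by
  rcases Nat.even_or_odd i with h|h
  · simp [h.neg_one_pow, h]; norm_num
  · simp [h.neg_one_pow, Nat.not_even_iff_odd.mpr h]

lemma ipow (n : ℕ) : (1:ℂ) + (-1)^n + I^n + (-I)^n = if 4 ∣ n then 4 else 0 := by
  obtain ⟨q, r, hr, rfl⟩ : ∃ q r, r < 4 ∧ n = 4*q + r := ⟨n/4, n%4, by omega, by omega⟩
  have h4 : (I:ℂ)^4 = 1 := by simp [pow_succ, Complex.I_mul_I]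
  have hm1 : ((-1:ℂ))^4 = 1 := by norm_num
  have hmi : ((-I):ℂ)^4 = 1 := by rw [neg_pow]; simp [h4, hm1]
  have hd : ∀ r, r < 4 → (4 ∣ 4*q + r ↔ r = 0) := by omega
  interval_cases r <;>
    simp [pow_add, pow_mul, h4, hm1, hmi, hd, pow_succ, Complex.I_mul_I] <;> norm_num

lemma pt (i j : ℕ) (z : ℂ) :
    z*1^i*1^j + z*(-1)^i*1^j + z*1^i*(-1)^j + z*(-1)^i*(-1)^j
      + z*I^i*I^j + z*(-I)^i*I^j + z*(-I)^i*(-I)^j + z*I^i*(-I)^j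
    = 8 * (if Even i ∧ 4 ∣ (i+j) then z else 0) := by
  have key : z*1^i*1^j + z*(-1)^i*1^j + z*1^i*(-1)^j + z*(-1)^i*(-1)^j
      + z*I^i*I^j + z*(-I)^i*I^j + z*(-I)^i*(-I)^j + z*I^i*(-I)^j
      = z * ((1+(-1)^i) * (1 + (-1)^(i+j) + I^(i+j) + (-I)^(i+j))) := by
    have hn : ∀ (n:ℕ), (-I)^n = (-1)^n * I^n := fun n => by
      rw [neg_eq_neg_one_mul, mul_pow]
    simp only [hn, pow_add]
    have hsq : ((-1:ℂ))^(i*2) = 1 := by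
      rw [mul_comm, pow_mul]; norm_num
    ring_nf
    simp only [hsq]
    ring
  rw [key, epow i, ipow (i+j)]
  by_cases hA : Even i <;> by_cases hB : 4 ∣ (i+j)
  · rw [if_pos hA, if_pos hB, if_pos ⟨hA, hB⟩]; ring
  · rw [if_pos hA, if_neg hB, if_neg (by tauto)]; ring
  · rw [if_neg hA, if_pos hB, if_neg (by tauto)]; ring
  · rw [if_neg hA, if_neg hB, if_neg (by tauto)]; ring

theorem stmt_14 (k m : ℕ) (hk : 0 < k) (hm : 0 < m) (hkm : k ≤ m) :
    2 * (∑ t ∈ Finset.range (m + 1), ∑ j ∈ Finset.range (2 * k + 1),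
        C (4 * k + 1) (2 * j) * C (4 * m - 4 * k + 1) (4 * (t : ℤ) - 2 * j)) =
      2 ^ (4 * m) + (-1) ^ m * 2 ^ (2 * m) := by
  set a : ℕ := 4*k+1 with ha
  set b : ℕ := 4*m-4*k+1 with hb
  -- facts extracted from nonzero terms
  have hfact : ∀ t j : ℕ, C a (2*(j:ℤ)) * C b (4*(t:ℤ) - 2*(j:ℤ)) ≠ 0 →
      2*j ≤ 4*k ∧ 2*j ≤ 4*t ∧ 4*t - 2*j ≤ b := by
    intro t j h
    have h1 := C_ne_zero (left_ne_zero_of_mul h)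
    have h2 := C_ne_zero (right_ne_zero_of_mul h)
    omega
  -- Step A : reindex
  have hS : (∑ t ∈ Finset.range (m + 1), ∑ j ∈ Finset.range (2 * k + 1),
        C (4 * k + 1) (2 * j) * C (4 * m - 4 * k + 1) (4 * (t : ℤ) - 2 * j))
      = ∑ i ∈ Finset.range (a+1), ∑ j ∈ Finset.range (b+1),
          (if Even i ∧ 4 ∣ (i+j) then ((a.choose i : ℤ) * (b.choose j : ℤ)) else 0) := by
    rw [← Finset.sum_product', ← Finset.sum_product']
    refine Finset.sum_bij_ne_zero (fun p _ _ => (2*p.2, 4*p.1 - 2*p.2)) ?_ ?_ ?_ ?_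
    · rintro ⟨t, j⟩ h1 h2
      obtain ⟨f1, f2, f3⟩ := hfact t j h2
      simp only [Finset.mem_product, Finset.mem_range] at h1 ⊢
      omega
    · rintro ⟨t1, j1⟩ m1 n1 ⟨t2, j2⟩ m2 n2 heq
      obtain ⟨f1, f2, f3⟩ := hfact t1 j1 n1
      obtain ⟨g1, g2, g3⟩ := hfact t2 j2 n2
      simp only [Prod.mk.injEq] at heq
      obtain ⟨e1, e2⟩ := heq
      ext <;> simp <;> omega
    · rintro ⟨i, j⟩ hmem hne
      simp only [Finset.mem_product, Finset.mem_range] at hmem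
      have hcond : Even i ∧ 4 ∣ (i + j) := by
        by_contra hc
        rw [if_neg hc] at hne
        exact hne rfl
      obtain ⟨⟨p, hp⟩, ⟨t, ht⟩⟩ := hcond
      refine ⟨(t, p), ?_, ?_, ?_⟩
      · simp only [Finset.mem_product, Finset.mem_range]
        omega
      · rw [if_pos ⟨⟨p, hp⟩, ⟨t, ht⟩⟩] at hne
        have e1 : C a (2*(p:ℤ)) = (a.choose i : ℤ) := by
          rw [C_eval (by positivity), show (2*(p:ℤ)).toNat = i by omega]
        have e2 : C b (4*(t:ℤ) - 2*(p:ℤ)) = (b.choose j : ℤ) := by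
          rw [C_eval (by omega), show (4*(t:ℤ)-2*(p:ℤ)).toNat = j by omega]
        simp only [e1, e2]
        rw [← ha, ← hb, e1, e2]
        exact hne
      · simp only [Prod.mk.injEq]
        omega
    · rintro ⟨t, j⟩ h1 h2
      obtain ⟨f1, f2, f3⟩ := hfact t j h2
      have hcond : Even (2*j) ∧ 4 ∣ (2*j + (4*t - 2*j)) := by
        constructor
        · exact ⟨j, by omega⟩
        · exact ⟨t, by omega⟩
      rw [if_pos hcond]
      rw [C_eval (by positivity), C_eval (by omega),
        show (2*(j:ℤ)).toNat = 2*j by omega,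
        show (4*(t:ℤ)-2*(j:ℤ)).toNat = 4*t - 2*j by omega]
  rw [hS]
  -- Step B : complex evaluation
  set S2 : ℂ := ∑ i ∈ Finset.range (a+1), ∑ j ∈ Finset.range (b+1),
      (if Even i ∧ 4 ∣ (i+j) then ((a.choose i : ℂ) * (b.choose j : ℂ)) else 0) with hS2
  have hcast : ((∑ i ∈ Finset.range (a+1), ∑ j ∈ Finset.range (b+1),
      (if Even i ∧ 4 ∣ (i+j) then ((a.choose i : ℤ) * (b.choose j : ℤ)) else 0) : ℤ) : ℂ) = S2 := by
    rw [hS2]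
    push_cast [apply_ite (fun z : ℤ => (z : ℂ))]
    rfl
  have e1 : ∀ c d : ℂ, (1+c)^a * (1+d)^b = ∑ i ∈ Finset.range (a+1), ∑ j ∈ Finset.range (b+1),
      ((a.choose i : ℂ) * (b.choose j : ℂ)) * c^i * d^j := by
    intro c d
    rw [expand' a c, expand' b d, Finset.sum_mul_sum]
    exact Finset.sum_congr rfl fun i _ => Finset.sum_congr rfl fun j _ => by ring
  have big : (1+1:ℂ)^a*(1+1)^b + (1+(-1))^a*(1+1)^b + (1+1)^a*(1+(-1))^b + (1+(-1))^a*(1+(-1))^b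
      + (1+I)^a*(1+I)^b + (1+(-I))^a*(1+I)^b + (1+(-I))^a*(1+(-I))^b + (1+I)^a*(1+(-I))^b
      = 8 * S2 := by
    simp only [e1, ← Finset.sum_add_distrib]
    rw [hS2, Finset.mul_sum]
    refine Finset.sum_congr rfl fun i _ => ?_
    rw [Finset.mul_sum]
    refine Finset.sum_congr rfl fun j _ => ?_
    linear_combination pt i j ((a.choose i : ℂ) * (b.choose j : ℂ))
  have hI2 : (1+I:ℂ)^2 = 2*I := by linear_combination Complex.I_sq
  have hI2' : (1+(-I):ℂ)^2 = -(2*I) := by linear_combination Complex.I_sq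
  have q2 : (1+I:ℂ)^4 = -4 := by
    rw [show (4:ℕ) = 2*2 from rfl, pow_mul, hI2, mul_pow, Complex.I_sq]
    norm_num
  have q2' : (1+(-I):ℂ)^4 = -4 := by
    rw [show (4:ℕ) = 2*2 from rfl, pow_mul, hI2', neg_pow, mul_pow, Complex.I_sq]
    norm_num
  have pfac : ∀ (z : ℂ) (n : ℕ), z^4 = -4 → z^(4*n+1) = (-4)^n * z := by
    intro z n h
    rw [pow_add, pow_mul, h, pow_one]
  have v5 : (1+I:ℂ)^a = (-4)^k * (1+I) := by rw [ha]; exact pfac _ _ q2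
  have v5b : (1+I:ℂ)^b = (-4)^(m-k) * (1+I) := by
    rw [show b = 4*(m-k)+1 by omega]; exact pfac _ _ q2
  have v6 : (1+(-I):ℂ)^a = (-4)^k * (1+(-I)) := by rw [ha]; exact pfac _ _ q2'
  have v6b : (1+(-I):ℂ)^b = (-4)^(m-k) * (1+(-I)) := by
    rw [show b = 4*(m-k)+1 by omega]; exact pfac _ _ q2'
  have hmm4 : (-4:ℂ)^k * (-4)^(m-k) = (-4)^m := by
    rw [← pow_add]; congr 1; omega
  have h2ab : (2:ℂ)^a * 2^b = 2^(4*m+2) := by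
    rw [← pow_add]; congr 1; omega
  have val : 8 * S2 = 2^(4*m+2) + 4*(-4)^m := by
    rw [← big, v5, v5b, v6, v6b]
    rw [show (1+(-1):ℂ) = 0 by norm_num, show (1+1:ℂ) = 2 by norm_num]
    rw [zero_pow (show a ≠ 0 by omega), zero_pow (show b ≠ 0 by omega)]
    linear_combination h2ab + 4 * hmm4
  have final : (2:ℂ) * S2 = 2^(4*m) + (-1)^m * 2^(2*m) := by
    have h4 : (4:ℂ) ≠ 0 := by norm_num
    apply mul_left_cancel₀ h4
    rw [show (4:ℂ) * (2*S2) = 8 * S2 by ring, val]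
    rw [show (-4:ℂ) = (-1)*2^2 by norm_num, mul_pow, ← pow_mul]
    rw [pow_add]
    ring
  have := final
  rw [← hcast] at this
  exact_mod_cast this
end

section
/- For positive integers k and m with k ≤ m, the double sum over t from 0 to m and j from 0 to 2k of C(4k, 2j)·C(4m−4k+3, 4t−2j) equals 2^(4m) − (−1)^m · 2^(2m). -/
lemma Isum (s : ℕ) : ∑ r ∈ Finset.range 4, Complex.I ^ (r * s) = if s % 4 = 0 then 4 else 0 := by
  have h4 : Complex.I ^ (4:ℕ) = 1 := by
    rw [show (4:ℕ) = 2*2 from rfl, pow_mul, Complex.I_sq]; ring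
  have hz : ∀ r, Complex.I ^ (r * s) = (Complex.I ^ (s % 4)) ^ r := by
    intro r
    have h := Nat.div_add_mod s 4
    rw [← pow_mul]
    conv_lhs => rw [show r * s = (s % 4) * r + 4 * (s / 4 * r) by
      conv_lhs => rw [← h]
      ring]
    rw [pow_add, pow_mul, pow_mul, h4, one_pow, mul_one]
  simp only [hz]
  have hlt : s % 4 < 4 := Nat.mod_lt _ (by norm_num)
  interval_cases h : s % 4
  · simp [Finset.sum_range_succ]
  · simp only [Finset.sum_range_succ, Finset.sum_range_zero]
    norm_num
  · simp only [Finset.sum_range_succ, Finset.sum_range_zero]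
    norm_num
  · simp only [Finset.sum_range_succ, Finset.sum_range_zero]
    norm_num
    linear_combination (-Complex.I) * Complex.I_sq

lemma splitEO (n : ℕ) (f : ℕ → ℂ) :
    ∑ l ∈ Finset.range (2 * n + 1), f l =
      ∑ j ∈ Finset.range (n + 1), f (2 * j) + ∑ j ∈ Finset.range n, f (2 * j + 1) := by
  induction n with
  | zero => simp
  | succ n ih =>
    rw [show 2 * (n + 1) + 1 = (2 * n + 1) + 1 + 1 by ring]
    rw [Finset.sum_range_succ, Finset.sum_range_succ, ih]
    rw [Finset.sum_range_succ (fun j => f (2 * j)) (n + 1),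
        Finset.sum_range_succ (fun j => f (2 * j + 1)) n]
    rw [show 2 * n + 1 + 1 = 2 * (n + 1) by ring]
    ring

lemma Epoly (k : ℕ) (z : ℂ) :
    (1 + z) ^ (4 * k) + (1 - z) ^ (4 * k) =
      2 * ∑ j ∈ Finset.range (2 * k + 1), (Nat.choose (4 * k) (2 * j) : ℂ) * z ^ (2 * j) := by
  have h1 : (1 + z) ^ (4 * k) = ∑ l ∈ Finset.range (4 * k + 1),
      (Nat.choose (4 * k) l : ℂ) * z ^ l := by
    rw [add_comm, add_pow]
    exact Finset.sum_congr rfl fun l _ => by ring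
  have h2 : (1 - z) ^ (4 * k) = ∑ l ∈ Finset.range (4 * k + 1),
      (Nat.choose (4 * k) l : ℂ) * (-z) ^ l := by
    rw [sub_eq_add_neg, add_comm, add_pow]
    exact Finset.sum_congr rfl fun l _ => by ring
  rw [h1, h2, ← Finset.sum_add_distrib]
  rw [show 4 * k + 1 = 2 * (2 * k) + 1 by ring,
    splitEO (2 * k) (fun l => (Nat.choose (4 * k) l : ℂ) * z ^ l + (Nat.choose (4 * k) l : ℂ) * (-z) ^ l)]
  have hodd : ∑ j ∈ Finset.range (2 * k),
      ((Nat.choose (4 * k) (2 * j + 1) : ℂ) * z ^ (2 * j + 1)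
        + (Nat.choose (4 * k) (2 * j + 1) : ℂ) * (-z) ^ (2 * j + 1)) = 0 := by
    apply Finset.sum_eq_zero
    intro j _
    rw [Odd.neg_pow ⟨j, by ring⟩]
    ring
  rw [hodd, add_zero, Finset.mul_sum]
  apply Finset.sum_congr rfl
  intro j _
  rw [Even.neg_pow ⟨j, by ring⟩]
  ring

lemma inner_eq (k m : ℕ) (hkm : k ≤ m) (j : ℕ) (hj : j < 2 * k + 1) :
    ∑ t ∈ Finset.range (m + 1), C (4 * m - 4 * k + 3) (4 * (t : ℤ) - 2 * j) =
      ∑ i ∈ Finset.range (4 * m - 4 * k + 3 + 1),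
        if (2 * j + i) % 4 = 0 then ((4 * m - 4 * k + 3).choose i : ℤ) else 0 := by
  set n2 := 4 * m - 4 * k + 3 with hn2
  have hterm : ∀ t : ℕ, C n2 (4 * (t : ℤ) - 2 * j) =
      if 2 * j ≤ 4 * t ∧ 4 * t - 2 * j ≤ n2 then (n2.choose (4 * t - 2 * j) : ℤ) else 0 := by
    intro t
    unfold C
    by_cases h : 2 * j ≤ 4 * t
    · rw [if_pos (by omega)]
      rw [show (4 * (t : ℤ) - 2 * j).toNat = 4 * t - 2 * j by omega]
      by_cases h2 : 4 * t - 2 * j ≤ n2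
      · rw [if_pos ⟨h, h2⟩]
      · rw [if_neg (by tauto), Nat.choose_eq_zero_of_lt (by omega), Int.ofNat_zero]
    · rw [if_neg (by omega), if_neg (by tauto)]
  simp only [hterm]
  rw [← Finset.sum_filter, ← Finset.sum_filter]
  apply Finset.sum_nbij' (i := fun t => 4 * t - 2 * j) (j := fun i => (2 * j + i) / 4)
  · intro t ht
    simp only [Finset.mem_filter, Finset.mem_range] at ht ⊢
    omega
  · intro i hi
    simp only [Finset.mem_filter, Finset.mem_range] at hi ⊢
    omega
  · intro t ht
    simp only [Finset.mem_filter, Finset.mem_range] at ht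
    omega
  · intro i hi
    simp only [Finset.mem_filter, Finset.mem_range] at hi
    omega
  · intro t ht
    rfl

theorem stmt_15 (k m : ℕ) (hk : 0 < k) (hm : 0 < m) (hkm : k ≤ m) :
    (∑ t ∈ Finset.range (m + 1), ∑ j ∈ Finset.range (2 * k + 1),
        C (4 * k) (2 * j) * C (4 * m - 4 * k + 3) (4 * (t : ℤ) - 2 * j)) =
      2 ^ (4 * m) - (-1) ^ m * 2 ^ (2 * m) := by
  set n2 := 4 * m - 4 * k + 3 with hn2
  set a := m - k with ha
  have ham : m = k + a := by omega
  have hn2a : n2 = 4 * a + 3 := by omega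
  have hC1 : ∀ j : ℕ, C (4 * k) (2 * (j : ℤ)) = ((4 * k).choose (2 * j) : ℤ) := by
    intro j
    unfold C
    rw [if_pos (by positivity), show (2 * (j : ℤ)).toNat = 2 * j by omega]
  have hS : (∑ t ∈ Finset.range (m + 1), ∑ j ∈ Finset.range (2 * k + 1),
        C (4 * k) (2 * j) * C n2 (4 * (t : ℤ) - 2 * j)) =
      ∑ j ∈ Finset.range (2 * k + 1), ((4 * k).choose (2 * j) : ℤ) *
        ∑ i ∈ Finset.range (n2 + 1), (if (2 * j + i) % 4 = 0 then (n2.choose i : ℤ) else 0) := by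
    rw [Finset.sum_comm]
    refine Finset.sum_congr rfl fun j hj => ?_
    rw [← Finset.mul_sum, hC1 j, inner_eq k m hkm j (Finset.mem_range.mp hj)]
  rw [hS]
  -- now the complex computation
  set T : ℤ := ∑ j ∈ Finset.range (2 * k + 1), ((4 * k).choose (2 * j) : ℤ) *
        ∑ i ∈ Finset.range (n2 + 1), (if (2 * j + i) % 4 = 0 then (n2.choose i : ℤ) else 0) with hT
  have hcast : ((T : ℤ) : ℂ) = ∑ j ∈ Finset.range (2 * k + 1), ((4 * k).choose (2 * j) : ℂ) *
        ∑ i ∈ Finset.range (n2 + 1), (if (2 * j + i) % 4 = 0 then (n2.choose i : ℂ) else 0) := by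
    rw [hT]
    push_cast
    rfl
  have e1 : ∀ j i : ℕ, (8 : ℂ) * (((4 * k).choose (2 * j) : ℂ) *
      (if (2 * j + i) % 4 = 0 then (n2.choose i : ℂ) else 0)) =
      ∑ r ∈ Finset.range 4, (2 * ((4 * k).choose (2 * j) : ℂ) * (Complex.I ^ r) ^ (2 * j)) *
        ((n2.choose i : ℂ) * (Complex.I ^ r) ^ i) := by
    intro j i
    have h2 : ∑ r ∈ Finset.range 4, (2 * ((4 * k).choose (2 * j) : ℂ) * (Complex.I ^ r) ^ (2 * j)) *
        ((n2.choose i : ℂ) * (Complex.I ^ r) ^ i) =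
        2 * ((4 * k).choose (2 * j) : ℂ) * (n2.choose i : ℂ) *
          ∑ r ∈ Finset.range 4, Complex.I ^ (r * (2 * j + i)) := by
      rw [Finset.mul_sum]
      refine Finset.sum_congr rfl fun r _ => ?_
      rw [show r * (2 * j + i) = r * (2 * j) + r * i by ring, pow_add, pow_mul, pow_mul]
      ring
    rw [h2, Isum]
    split <;> ring
  have key : (8 : ℂ) * ((T : ℤ) : ℂ) = 2 ^ (4 * m + 3) - 8 * (-4) ^ m := by
    have hka : ((-4 : ℂ)) ^ k * (-4) ^ a = (-4) ^ m := by
      rw [← pow_add]; congr 1; omega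
    have hI3 : Complex.I ^ 3 = -Complex.I := by
      rw [pow_succ, Complex.I_sq]; ring
    have hI4p : (1 + Complex.I) ^ (4 * k) = ((-4 : ℂ)) ^ k := by
      rw [pow_mul, show (1 + Complex.I) ^ 4 = -4 by
        linear_combination (Complex.I ^ 2 + 4 * Complex.I + 5) * Complex.I_sq]
    have hI4m : (1 - Complex.I) ^ (4 * k) = ((-4 : ℂ)) ^ k := by
      rw [pow_mul, show (1 - Complex.I) ^ 4 = -4 by
        linear_combination (Complex.I ^ 2 - 4 * Complex.I + 5) * Complex.I_sq]
    have hpn2p : (1 + Complex.I) ^ n2 = ((-4 : ℂ)) ^ a * (-2 + 2 * Complex.I) := by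
      rw [hn2a, pow_add, pow_mul, show (1 + Complex.I) ^ 4 = -4 by
        linear_combination (Complex.I ^ 2 + 4 * Complex.I + 5) * Complex.I_sq,
        show (1 + Complex.I) ^ 3 = -2 + 2 * Complex.I by
          linear_combination (Complex.I + 3) * Complex.I_sq]
    have hpn2m : (1 - Complex.I) ^ n2 = ((-4 : ℂ)) ^ a * (-2 - 2 * Complex.I) := by
      rw [hn2a, pow_add, pow_mul, show (1 - Complex.I) ^ 4 = -4 by
        linear_combination (Complex.I ^ 2 - 4 * Complex.I + 5) * Complex.I_sq,
        show (1 - Complex.I) ^ 3 = -2 - 2 * Complex.I by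
          linear_combination (3 - Complex.I) * Complex.I_sq]
    have hbin : ∀ w : ℂ, ∑ i ∈ Finset.range (n2 + 1), (n2.choose i : ℂ) * w ^ i
        = (1 + w) ^ n2 := by
      intro w
      rw [add_comm 1 w, add_pow]
      exact Finset.sum_congr rfl fun i _ => by rw [one_pow]; ring
    have hw : ∀ w : ℂ,
        (∑ j ∈ Finset.range (2 * k + 1), 2 * ((4 * k).choose (2 * j) : ℂ) * w ^ (2 * j)) *
          (∑ i ∈ Finset.range (n2 + 1), (n2.choose i : ℂ) * w ^ i) =
        ((1 + w) ^ (4 * k) + (1 - w) ^ (4 * k)) * (1 + w) ^ n2 := by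
      intro w
      rw [show (∑ j ∈ Finset.range (2 * k + 1),
            2 * ((4 * k).choose (2 * j) : ℂ) * w ^ (2 * j)) =
          2 * ∑ j ∈ Finset.range (2 * k + 1), ((4 * k).choose (2 * j) : ℂ) * w ^ (2 * j) by
        rw [Finset.mul_sum]; exact Finset.sum_congr rfl fun j _ => by ring]
      rw [← Epoly, hbin w]
    rw [hcast, Finset.mul_sum]
    have step : ∀ j ∈ Finset.range (2 * k + 1), (8 : ℂ) * (((4 * k).choose (2 * j) : ℂ) *
        ∑ i ∈ Finset.range (n2 + 1), (if (2 * j + i) % 4 = 0 then (n2.choose i : ℂ) else 0)) =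
        ∑ i ∈ Finset.range (n2 + 1), ∑ r ∈ Finset.range 4,
          (2 * ((4 * k).choose (2 * j) : ℂ) * (Complex.I ^ r) ^ (2 * j)) *
            ((n2.choose i : ℂ) * (Complex.I ^ r) ^ i) := by
      intro j _
      rw [Finset.mul_sum, Finset.mul_sum]
      exact Finset.sum_congr rfl fun i _ => e1 j i
    rw [Finset.sum_congr rfl step]
    have swap1 : (∑ j ∈ Finset.range (2 * k + 1), ∑ i ∈ Finset.range (n2 + 1),
          ∑ r ∈ Finset.range 4,
          (2 * ((4 * k).choose (2 * j) : ℂ) * (Complex.I ^ r) ^ (2 * j)) *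
            ((n2.choose i : ℂ) * (Complex.I ^ r) ^ i)) =
        ∑ r ∈ Finset.range 4, ∑ j ∈ Finset.range (2 * k + 1), ∑ i ∈ Finset.range (n2 + 1),
          (2 * ((4 * k).choose (2 * j) : ℂ) * (Complex.I ^ r) ^ (2 * j)) *
            ((n2.choose i : ℂ) * (Complex.I ^ r) ^ i) := by
      rw [show (∑ j ∈ Finset.range (2 * k + 1), ∑ i ∈ Finset.range (n2 + 1),
          ∑ r ∈ Finset.range 4,
          (2 * ((4 * k).choose (2 * j) : ℂ) * (Complex.I ^ r) ^ (2 * j)) *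
            ((n2.choose i : ℂ) * (Complex.I ^ r) ^ i)) =
        ∑ j ∈ Finset.range (2 * k + 1), ∑ r ∈ Finset.range 4, ∑ i ∈ Finset.range (n2 + 1),
          (2 * ((4 * k).choose (2 * j) : ℂ) * (Complex.I ^ r) ^ (2 * j)) *
            ((n2.choose i : ℂ) * (Complex.I ^ r) ^ i) from
        Finset.sum_congr rfl fun j _ => Finset.sum_comm]
      exact Finset.sum_comm
    rw [swap1]
    rw [show (∑ r ∈ Finset.range 4, ∑ j ∈ Finset.range (2 * k + 1),
          ∑ i ∈ Finset.range (n2 + 1),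
          (2 * ((4 * k).choose (2 * j) : ℂ) * (Complex.I ^ r) ^ (2 * j)) *
            ((n2.choose i : ℂ) * (Complex.I ^ r) ^ i)) =
        ∑ r ∈ Finset.range 4,
          ((1 + Complex.I ^ r) ^ (4 * k) + (1 - Complex.I ^ r) ^ (4 * k)) *
            (1 + Complex.I ^ r) ^ n2 from
      Finset.sum_congr rfl fun r _ => by
        rw [← Finset.sum_mul_sum]; exact hw (Complex.I ^ r)]
    rw [Finset.sum_range_succ, Finset.sum_range_succ, Finset.sum_range_succ,
      Finset.sum_range_succ, Finset.sum_range_zero]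
    have hr0 : ((1 + Complex.I ^ 0) ^ (4 * k) + (1 - Complex.I ^ 0) ^ (4 * k)) *
        (1 + Complex.I ^ 0) ^ n2 = 2 ^ (4 * m + 3) := by
      rw [pow_zero, show (1 + (1 : ℂ)) = 2 by norm_num, show (1 - (1 : ℂ)) = 0 by norm_num,
        zero_pow (by omega), add_zero, ← pow_add]
      congr 1
      omega
    have hr1 : ((1 + Complex.I ^ 1) ^ (4 * k) + (1 - Complex.I ^ 1) ^ (4 * k)) *
        (1 + Complex.I ^ 1) ^ n2 = (-4) ^ m * (-4 + 4 * Complex.I) := by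
      rw [pow_one, hI4p, hI4m, hpn2p]
      linear_combination (-4 + 4 * Complex.I) * hka
    have hr2 : ((1 + Complex.I ^ 2) ^ (4 * k) + (1 - Complex.I ^ 2) ^ (4 * k)) *
        (1 + Complex.I ^ 2) ^ n2 = 0 := by
      rw [Complex.I_sq, show ((1 : ℂ) + -1) = 0 by norm_num, zero_pow (show n2 ≠ 0 by omega), mul_zero]
    have hr3 : ((1 + Complex.I ^ 3) ^ (4 * k) + (1 - Complex.I ^ 3) ^ (4 * k)) *
        (1 + Complex.I ^ 3) ^ n2 = (-4) ^ m * (-4 - 4 * Complex.I) := by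
      rw [hI3, show (1 : ℂ) + -Complex.I = 1 - Complex.I by ring,
        show (1 : ℂ) - -Complex.I = 1 + Complex.I by ring, hI4m, hI4p, hpn2m]
      linear_combination (-4 - 4 * Complex.I) * hka
    rw [hr0, hr1, hr2, hr3]
    ring
  have hZ : (8 : ℤ) * T = 2 ^ (4 * m + 3) - 8 * (-4) ^ m := by
    have hinj : (((8 : ℤ) * T : ℤ) : ℂ) = ((2 ^ (4 * m + 3) - 8 * (-4) ^ m : ℤ) : ℂ) := by
      push_cast
      linear_combination key
    exact_mod_cast hinj
  have hTval : T = 2 ^ (4 * m) - (-4) ^ m := by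
    have h8 : (8 : ℤ) * T = 8 * (2 ^ (4 * m) - (-4) ^ m) := by
      rw [hZ, pow_add]; ring
    exact mul_left_cancel₀ (by norm_num) h8
  rw [hTval]
  congr 1
  rw [show ((-4) : ℤ) = (-1) * 2 ^ 2 by norm_num, mul_pow, ← pow_mul]
end

section
/- For a positive integer n with n ≥ 2 and an integer i with 1 ≤ i ≤ n−1, the set O_i of all vectors of Hamming weight i in the F₂-vector space F₂^n generates F₂^n as a group if and only if i is odd. -/
private lemma zmod2_cases : ∀ a : ZMod 2, a = 0 ∨ a = 1 := by decide

private lemma add_self_pi {n : ℕ} (x : Fin n → ZMod 2) : x + x = 0 := by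
  funext j
  show x j + x j = 0
  rcases zmod2_cases (x j) with h | h <;> rw [h] <;> decide

private lemma even_nsmul_pi {n : ℕ} {m : ℕ} (hm : Even m) (x : Fin n → ZMod 2) :
    m • x = 0 := by
  obtain ⟨k, rfl⟩ := hm
  rw [add_nsmul]
  have : k • x + k • x = 0 := add_self_pi _
  simpa using this

private def vS {n : ℕ} (S : Finset (Fin n)) : Fin n → ZMod 2 := ∑ k ∈ S, Pi.single k 1

private lemma vS_apply {n : ℕ} (S : Finset (Fin n)) (j : Fin n) :
    vS S j = if j ∈ S then 1 else 0 := by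
  simp [vS, Finset.sum_apply, Pi.single_apply, Finset.sum_ite_eq']

private lemma hammingNorm_vS {n : ℕ} (S : Finset (Fin n)) : hammingNorm (vS S) = S.card := by
  unfold hammingNorm
  congr 1
  ext j
  simp [vS_apply]

theorem stmt_16 (n : ℕ) (hn : 2 ≤ n) (i : ℕ) (hi1 : 1 ≤ i) (hi2 : i ≤ n - 1) :
    AddSubgroup.closure {v : Fin n → ZMod 2 | hammingNorm v = i} = ⊤ ↔ Odd i := by
  constructor
  · intro htop
    by_contra hodd
    rw [Nat.not_odd_iff_even] at hodd
    -- sum-of-coordinates homomorphism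
    set φ : (Fin n → ZMod 2) →+ ZMod 2 :=
      AddMonoidHom.mk' (fun v => ∑ j, v j) (by
        intro a b
        simp [Finset.sum_add_distrib]) with hφ
    have hker : AddSubgroup.closure {v : Fin n → ZMod 2 | hammingNorm v = i} ≤ φ.ker := by
      rw [AddSubgroup.closure_le]
      intro v hv
      simp only [Set.mem_setOf_eq] at hv
      simp only [SetLike.mem_coe, AddMonoidHom.mem_ker, hφ, AddMonoidHom.mk'_apply]
      have : ∑ j, v j = ∑ j ∈ Finset.univ.filter (fun j => v j ≠ 0), v j :=
        (Finset.sum_filter_ne_zero _).symm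
      rw [this]
      have h1 : ∀ j ∈ Finset.univ.filter (fun j => v j ≠ 0), v j = 1 := by
        intro j hj
        simp only [Finset.mem_filter] at hj
        rcases zmod2_cases (v j) with h | h
        · exact absurd h hj.2
        · exact h
      rw [Finset.sum_congr rfl h1, Finset.sum_const]
      have hcard : (Finset.univ.filter (fun j => v j ≠ 0)).card = i := hv
      rw [hcard, nsmul_eq_mul, mul_one]
      exact (ZMod.natCast_eq_zero_iff i 2).2 hodd.two_dvd
    have hj0 : Pi.single (⟨0, by omega⟩ : Fin n) (1 : ZMod 2) ∈ φ.ker := by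
      apply hker
      rw [htop]; trivial
    simp only [AddMonoidHom.mem_ker, hφ, AddMonoidHom.mk'_apply] at hj0
    rw [Finset.sum_pi_single'] at hj0
    · simp at hj0
  · intro hodd
    set C := AddSubgroup.closure {v : Fin n → ZMod 2 | hammingNorm v = i} with hC
    -- pairs e_j + e_k ∈ C for j ≠ k
    have hpair : ∀ j k : Fin n, j ≠ k →
        Pi.single j (1 : ZMod 2) + Pi.single k 1 ∈ C := by
      intro j k hjk
      have hcard2 : (Finset.univ \ {j, k} : Finset (Fin n)).card = n - 2 := by
        rw [Finset.card_sdiff_of_subset (Finset.subset_univ _), Finset.card_pair hjk]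
        simp
      obtain ⟨t, hts, htc⟩ : ∃ t ⊆ (Finset.univ \ {j, k} : Finset (Fin n)), t.card = i - 1 :=
        Finset.exists_subset_card_eq (by omega)
      have hjt : j ∉ t := fun h => by
        have := hts h; simp [Finset.mem_sdiff] at this
      have hkt : k ∉ t := fun h => by
        have := hts h; simp [Finset.mem_sdiff] at this
      have h1 : vS (insert j t) ∈ C := by
        apply AddSubgroup.subset_closure
        show hammingNorm _ = i
        rw [hammingNorm_vS, Finset.card_insert_of_notMem hjt, htc]; omega
      have h2 : vS (insert k t) ∈ C := by
        apply AddSubgroup.subset_closure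
        show hammingNorm _ = i
        rw [hammingNorm_vS, Finset.card_insert_of_notMem hkt, htc]; omega
      have heq : vS (insert j t) + vS (insert k t) = Pi.single j 1 + Pi.single k 1 := by
        rw [show vS (insert j t) = Pi.single j 1 + vS t from Finset.sum_insert hjt,
            show vS (insert k t) = Pi.single k 1 + vS t from Finset.sum_insert hkt]
        have := add_self_pi (vS t)
        abel_nf
        rw [show (2 : ℤ) • vS t = vS t + vS t by abel, this]
        abel
      have := AddSubgroup.add_mem C h1 h2
      rwa [heq] at this
    -- singles e_j ∈ C
    have hsingle : ∀ j : Fin n, Pi.single j (1 : ZMod 2) ∈ C := by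
      intro j
      have hcard1 : (Finset.univ.erase j : Finset (Fin n)).card = n - 1 := by
        rw [Finset.card_erase_of_mem (Finset.mem_univ _)]; simp
      obtain ⟨t, hts, htc⟩ : ∃ t ⊆ (Finset.univ.erase j : Finset (Fin n)), t.card = i - 1 :=
        Finset.exists_subset_card_eq (by omega)
      have hjt : j ∉ t := fun h => by
        have := hts h; simp at this
      have h1 : vS (insert j t) ∈ C := by
        apply AddSubgroup.subset_closure
        show hammingNorm _ = i
        rw [hammingNorm_vS, Finset.card_insert_of_notMem hjt, htc]; omega
      have h2 : (∑ k ∈ t, (Pi.single j (1 : ZMod 2) + Pi.single k 1)) ∈ C := by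
        apply AddSubgroup.sum_mem
        intro k hk
        apply hpair
        intro h; exact hjt (h ▸ hk)
      have heq : vS (insert j t) + ∑ k ∈ t, (Pi.single j (1 : ZMod 2) + Pi.single k 1)
          = Pi.single j 1 := by
        rw [show vS (insert j t) = Pi.single j 1 + vS t from Finset.sum_insert hjt,
            Finset.sum_add_distrib, Finset.sum_const]
        have hteven : Even t.card := by
          rcases hodd with ⟨m, hm⟩
          exact ⟨m, by omega⟩
        rw [even_nsmul_pi hteven]
        have h2 : vS t + (∑ k ∈ t, Pi.single k (1 : ZMod 2)) = 0 := add_self_pi (vS t)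
        rw [show (∑ k ∈ t, Pi.single k (1 : ZMod 2)) = vS t from rfl] at *
        abel_nf
        rw [show (2 : ℤ) • vS t = vS t + vS t by abel, add_self_pi]
        abel
      have := AddSubgroup.add_mem C h1 h2
      rwa [heq] at this
    rw [eq_top_iff]
    intro v _
    rw [← Finset.univ_sum_single v]
    apply AddSubgroup.sum_mem
    intro j _
    rcases zmod2_cases (v j) with h | h
    · rw [h, Pi.single_zero]; exact AddSubgroup.zero_mem _
    · rw [h]; exact hsingle j
end

section
/- For a positive integer m, the cardinality of the set of nonzero vectors in F₂^(4m) whose Hamming weight is congruent to 0 or 1 modulo 4 equals 2^(4m−1) + (−1)^m · 2^(2m−1) − 1. -/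
open Finset

lemma key_sum {R : Type*} [CommRing R] (n : ℕ) (z : R) :
    ∑ v : Fin n → ZMod 2, z ^ hammingNorm v = (1 + z) ^ n := by
  have h : ∀ v : Fin n → ZMod 2,
      z ^ hammingNorm v = ∏ i, (if v i ≠ 0 then z else 1) := by
    intro v
    rw [Finset.prod_ite, Finset.prod_const, Finset.prod_const_one, mul_one]
    rfl
  simp_rw [h]
  rw [← Fintype.prod_sum (fun (_ : Fin n) (x : ZMod 2) => if x ≠ 0 then z else 1)]
  have : ∑ x : ZMod 2, (if x ≠ 0 then z else 1) = 1 + z := by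
    rw [show (univ : Finset (ZMod 2)) = {0, 1} by decide]
    simp
  rw [this, Finset.prod_const, Finset.card_univ, Fintype.card_fin]

lemma fiber_sum {R : Type*} [CommRing R] (n : ℕ) (z : R) (hz : z ^ 4 = 1) :
    (1 + z) ^ n = ∑ r ∈ range 4,
      ((univ.filter (fun v : Fin n → ZMod 2 => hammingNorm v % 4 = r)).card : R) * z ^ r := by
  rw [← key_sum n z]
  rw [← Finset.sum_fiberwise_of_maps_to (g := fun v : Fin n → ZMod 2 => hammingNorm v % 4)
    (t := range 4) (fun v _ => by simp [Nat.mod_lt]) (fun v => z ^ hammingNorm v)]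
  refine Finset.sum_congr rfl fun r hr => ?_
  have : ∀ v ∈ univ.filter (fun v : Fin n → ZMod 2 => hammingNorm v % 4 = r),
      z ^ hammingNorm v = z ^ r := by
    intro v hv
    simp only [mem_filter] at hv
    conv_lhs => rw [← Nat.div_add_mod (hammingNorm v) 4, pow_add, pow_mul, hz, one_pow, one_mul,
      hv.2]
  rw [Finset.sum_congr rfl this, Finset.sum_const, nsmul_eq_mul]

theorem stmt_18 (m : ℕ) (hm : 0 < m) :
    ((Finset.univ.filter (fun v : Fin (4 * m) → ZMod 2 =>
        v ≠ 0 ∧ (hammingNorm v % 4 = 0 ∨ hammingNorm v % 4 = 1))).card : ℤ) =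
      2 ^ (4 * m - 1) + (-1) ^ m * 2 ^ (2 * m - 1) - 1 := by
  set n := 4 * m with hn
  set c : ℕ → ℕ := fun r =>
    (univ.filter (fun v : Fin n → ZMod 2 => hammingNorm v % 4 = r)).card with hc
  have hi4 : (Zsqrtd.sqrtd : GaussianInt) ^ 4 = 1 := by decide
  have hsq : (Zsqrtd.sqrtd : GaussianInt) ^ 2 = -1 := by decide
  have hcu : (Zsqrtd.sqrtd : GaussianInt) ^ 3 = -Zsqrtd.sqrtd := by decide
  have hG := fiber_sum (R := GaussianInt) n Zsqrtd.sqrtd hi4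
  have hpow : ((1 : GaussianInt) + Zsqrtd.sqrtd) ^ n
      = (((-1) ^ m * 2 ^ (2 * m) : ℤ) : GaussianInt) := by
    have h2 : ((1 : GaussianInt) + Zsqrtd.sqrtd) ^ 4 = -4 := by decide
    rw [hn, pow_mul, h2]
    push_cast
    rw [pow_mul, ← mul_pow]
    norm_num
  rw [hpow] at hG
  simp only [Finset.sum_range_succ, Finset.sum_range_zero, pow_zero, pow_one, hsq, hcu,
    zero_add, mul_one, mul_neg] at hG
  have hre := congrArg Zsqrtd.re hG
  have him := congrArg Zsqrtd.im hG
  simp only [Zsqrtd.re_add, Zsqrtd.im_add, Zsqrtd.re_neg, Zsqrtd.im_neg, Zsqrtd.re_mul,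
    Zsqrtd.im_mul, Zsqrtd.re_natCast, Zsqrtd.im_natCast, Zsqrtd.re_intCast, Zsqrtd.im_intCast,
    Zsqrtd.re_sqrtd, Zsqrtd.im_sqrtd, mul_zero, mul_one, zero_mul, add_zero, zero_add,
    neg_zero] at hre him
  have hA : ((c 0 : ℤ) + c 1 + c 2 + c 3) = 2 ^ n := by
    have h1 := fiber_sum (R := ℤ) n 1 (by norm_num)
    norm_num [Finset.sum_range_succ] at h1
    simp only [hc]
    linarith [h1]
  have hcard : ((Finset.univ.filter (fun v : Fin n → ZMod 2 =>
      v ≠ 0 ∧ (hammingNorm v % 4 = 0 ∨ hammingNorm v % 4 = 1))).card : ℤ) + 1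
      = (c 0 : ℤ) + c 1 := by
    have hsplit : (univ.filter (fun v : Fin n → ZMod 2 =>
        hammingNorm v % 4 = 0 ∨ hammingNorm v % 4 = 1)).card = c 0 + c 1 := by
      simp only [hc]
      rw [Finset.filter_or, Finset.card_union_of_disjoint]
      simp only [Finset.disjoint_filter]
      intro v _ h0 h1
      omega
    have herase : univ.filter (fun v : Fin n → ZMod 2 =>
        v ≠ 0 ∧ (hammingNorm v % 4 = 0 ∨ hammingNorm v % 4 = 1))
        = (univ.filter (fun v : Fin n → ZMod 2 =>
            hammingNorm v % 4 = 0 ∨ hammingNorm v % 4 = 1)).erase 0 := by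
      ext v
      simp [Finset.mem_erase, and_comm]
    have hz : (0 : Fin n → ZMod 2) ∈ univ.filter (fun v : Fin n → ZMod 2 =>
        hammingNorm v % 4 = 0 ∨ hammingNorm v % 4 = 1) := by
      simp [hammingNorm_zero]
    have hpos : 0 < c 0 + c 1 := hsplit ▸ Finset.card_pos.mpr ⟨0, hz⟩
    rw [herase, Finset.card_erase_of_mem hz, hsplit]
    omega
  have h2 : (2 : ℤ) * (((Finset.univ.filter (fun v : Fin n → ZMod 2 =>
      v ≠ 0 ∧ (hammingNorm v % 4 = 0 ∨ hammingNorm v % 4 = 1))).card : ℤ))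
      = 2 ^ n + (-1) ^ m * 2 ^ (2 * m) - 2 := by linarith
  obtain ⟨k, hk⟩ : ∃ k, n = k + 1 := ⟨n - 1, by omega⟩
  obtain ⟨j, hj⟩ : ∃ j, 2 * m = j + 1 := ⟨2 * m - 1, by omega⟩
  have h3 : (2 : ℤ) ^ n = 2 * 2 ^ (n - 1) := by
    rw [hk]; simp [pow_succ]; ring
  have h4 : (2 : ℤ) ^ (2 * m) = 2 * 2 ^ (2 * m - 1) := by
    rw [hj]; simp [pow_succ]; ring
  rw [h3, h4] at h2
  linarith
end

section
/- For a positive integer m, the cardinality of the set of nonzero vectors in F₂^(4m+2) whose Hamming weight is congruent to 0 or 3 modulo 4 equals 2^(4m+1) − (−1)^m · 2^(2m) − 1. -/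
open Finset

namespace Stmt19Aux

lemma weight_card (n k : ℕ) :
    (Finset.univ.filter (fun v : Fin n → ZMod 2 => hammingNorm v = k)).card = n.choose k := by
  have h := Finset.card_powersetCard k (Finset.univ : Finset (Fin n))
  rw [Finset.card_univ, Fintype.card_fin] at h
  rw [← h]
  apply Finset.card_bij (fun v _ => Finset.univ.filter (fun j => v j ≠ 0))
  · intro v hv
    simp only [Finset.mem_filter] at hv
    simp [Finset.mem_powersetCard]
    exact hv.2
  · intro v hv w hw hvw
    funext j
    have : ∀ a b : ZMod 2, ((a ≠ 0) ↔ (b ≠ 0)) → a = b := by decide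
    apply this
    have := Finset.ext_iff.mp hvw j
    simpa using this
  · intro s hs
    simp only [Finset.mem_powersetCard] at hs
    refine ⟨fun j => if j ∈ s then 1 else 0, ?_, ?_⟩
    · simp only [Finset.mem_filter, Finset.mem_univ, true_and]
      rw [← hs.2]
      unfold hammingNorm
      congr 1
      ext j
      by_cases hj : j ∈ s <;> simp [hj]
    · ext j
      by_cases hj : j ∈ s <;> simp [hj]

lemma count_P (n : ℕ) (P : ℕ → Prop) [DecidablePred P] :
    (Finset.univ.filter (fun v : Fin n → ZMod 2 => P (hammingNorm v))).card
      = ∑ k ∈ Finset.range (n + 1), if P k then n.choose k else 0 := by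
  rw [Finset.card_eq_sum_card_fiberwise (f := hammingNorm) (t := Finset.range (n + 1))
    (fun v _ => by
      simp only [Finset.mem_coe, Finset.mem_range, Nat.lt_succ_iff]
      calc hammingNorm v ≤ Fintype.card (Fin n) := hammingNorm_le_card_fintype
        _ = n := Fintype.card_fin n)]
  refine Finset.sum_congr rfl fun k _ => ?_
  by_cases hP : P k
  · rw [if_pos hP, ← weight_card n k]
    congr 1
    ext v
    simp only [Finset.mem_filter, Finset.mem_univ, true_and]
    constructor
    · exact fun h => h.2
    · exact fun h => ⟨h ▸ hP, h⟩
  · rw [if_neg hP, Finset.card_eq_zero]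
    ext v
    simp only [Finset.mem_filter, Finset.notMem_empty, iff_false, not_and]
    intro h1 h2
    exact hP (h2 ▸ h1.2)

def I : GaussianInt := ⟨0, 1⟩

def rr (k : ℕ) : ℤ := if k % 4 = 0 then 1 else if k % 4 = 2 then -1 else 0
def ss (k : ℕ) : ℤ := if k % 4 = 1 then 1 else if k % 4 = 3 then -1 else 0

lemma I_pow (k : ℕ) : I ^ k = ⟨rr k, ss k⟩ := by
  have h4 : I ^ 4 = 1 := by decide
  have hmod : I ^ k = I ^ (k % 4) := by
    conv_lhs => rw [← Nat.div_add_mod k 4]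
    rw [pow_add, pow_mul, h4, one_pow, one_mul]
  rw [hmod, rr, ss]
  have hlt : k % 4 < 4 := Nat.mod_lt _ (by norm_num)
  set r := k % 4 with hr
  interval_cases r <;> simp <;> decide

lemma sum_re (s : Finset ℕ) (f : ℕ → GaussianInt) :
    (∑ k ∈ s, f k).re = ∑ k ∈ s, (f k).re := by
  classical
  induction s using Finset.induction with
  | empty => simp
  | insert _ _ h ih => simp [Finset.sum_insert h, ih]

lemma sum_im (s : Finset ℕ) (f : ℕ → GaussianInt) :
    (∑ k ∈ s, f k).im = ∑ k ∈ s, (f k).im := by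
  classical
  induction s using Finset.induction with
  | empty => simp
  | insert _ _ h ih => simp [Finset.sum_insert h, ih]

lemma binom_expand (n : ℕ) :
    (1 + I) ^ n = ∑ k ∈ Finset.range (n + 1), I ^ k * (n.choose k : GaussianInt) := by
  rw [add_comm]
  rw [add_pow]
  refine Finset.sum_congr rfl fun k _ => ?_
  rw [one_pow, mul_one]

lemma sum_rr (n : ℕ) :
    ∑ k ∈ Finset.range (n + 1), (n.choose k : ℤ) * rr k = ((1 + I) ^ n).re := by
  rw [binom_expand, sum_re]
  refine Finset.sum_congr rfl fun k _ => ?_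
  rw [I_pow]
  simp [Zsqrtd.re_mul, mul_comm]

lemma sum_ss (n : ℕ) :
    ∑ k ∈ Finset.range (n + 1), (n.choose k : ℤ) * ss k = ((1 + I) ^ n).im := by
  rw [binom_expand, sum_im]
  refine Finset.sum_congr rfl fun k _ => ?_
  rw [I_pow]
  simp [Zsqrtd.im_mul, mul_comm]

lemma key_pow (m : ℕ) :
    (1 + I) ^ (4 * m + 2) = ((((-1) ^ m * 2 ^ (2 * m + 1) : ℤ) : GaussianInt)) * I := by
  have e2 : (1 + I) ^ 2 = 2 * I := by decide
  have hIm : I ^ 2 = -1 := by decide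
  calc (1 + I) ^ (4 * m + 2) = ((1 + I) ^ 2) ^ (2 * m + 1) := by
        rw [← pow_mul]; ring_nf
    _ = (2 * I) ^ (2 * m + 1) := by rw [e2]
    _ = 2 ^ (2 * m + 1) * I ^ (2 * m + 1) := by rw [mul_pow]
    _ = 2 ^ (2 * m + 1) * ((I ^ 2) ^ m * I) := by rw [← pow_mul, ← pow_succ]
    _ = _ := by rw [hIm]; push_cast; ring

lemma key_re (m : ℕ) : ((1 + I) ^ (4 * m + 2)).re = 0 := by
  rw [key_pow]
  simp only [Zsqrtd.re_mul, Zsqrtd.re_intCast, Zsqrtd.im_intCast, I]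
  ring

lemma key_im (m : ℕ) : ((1 + I) ^ (4 * m + 2)).im = (-1) ^ m * 2 ^ (2 * m + 1) := by
  rw [key_pow]
  simp only [Zsqrtd.im_mul, Zsqrtd.re_intCast, Zsqrtd.im_intCast, I]
  ring

end Stmt19Aux

theorem stmt_19 (m : ℕ) (hm : 0 < m) :
    ((Finset.univ.filter (fun v : Fin (4 * m + 2) → ZMod 2 =>
        v ≠ 0 ∧ (hammingNorm v % 4 = 0 ∨ hammingNorm v % 4 = 3))).card : ℤ) =
      2 ^ (4 * m + 1) - (-1) ^ m * 2 ^ (2 * m) - 1 := by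
  classical
  have hzero_mem : (0 : Fin (4 * m + 2) → ZMod 2) ∈ Finset.univ.filter
      (fun v : Fin (4 * m + 2) → ZMod 2 =>
        hammingNorm v % 4 = 0 ∨ hammingNorm v % 4 = 3) := by
    simp [hammingNorm_zero]
  have hsplit : Finset.univ.filter (fun v : Fin (4 * m + 2) → ZMod 2 =>
      v ≠ 0 ∧ (hammingNorm v % 4 = 0 ∨ hammingNorm v % 4 = 3))
      = (Finset.univ.filter (fun v : Fin (4 * m + 2) → ZMod 2 =>
          hammingNorm v % 4 = 0 ∨ hammingNorm v % 4 = 3)).erase 0 := by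
    ext v
    simp only [Finset.mem_erase, Finset.mem_filter, Finset.mem_univ, true_and]
    try tauto
  rw [hsplit, Finset.card_erase_of_mem hzero_mem]
  have hpos : 1 ≤ (Finset.univ.filter (fun v : Fin (4 * m + 2) → ZMod 2 =>
      hammingNorm v % 4 = 0 ∨ hammingNorm v % 4 = 3)).card :=
    Finset.card_pos.mpr ⟨0, hzero_mem⟩
  rw [Nat.cast_sub hpos]
  have hcount : ((Finset.univ.filter (fun v : Fin (4 * m + 2) → ZMod 2 =>
      hammingNorm v % 4 = 0 ∨ hammingNorm v % 4 = 3)).card : ℤ)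
      = 2 ^ (4 * m + 1) - (-1) ^ m * 2 ^ (2 * m) := by
    have h1 := Stmt19Aux.count_P (4 * m + 2) (fun k => k % 4 = 0 ∨ k % 4 = 3)
    have h2 : ((Finset.univ.filter (fun v : Fin (4 * m + 2) → ZMod 2 =>
        hammingNorm v % 4 = 0 ∨ hammingNorm v % 4 = 3)).card : ℤ)
        = ∑ k ∈ Finset.range (4 * m + 2 + 1),
            if k % 4 = 0 ∨ k % 4 = 3 then (((4 * m + 2).choose k : ℤ)) else 0 := by
      rw [h1, Nat.cast_sum]
      refine Finset.sum_congr rfl fun k _ => ?_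
      split_ifs <;> simp
    have h3 : (2 : ℤ) * ∑ k ∈ Finset.range (4 * m + 2 + 1),
          (if k % 4 = 0 ∨ k % 4 = 3 then (((4 * m + 2).choose k : ℤ)) else 0)
        = ∑ k ∈ Finset.range (4 * m + 2 + 1),
            ((4 * m + 2).choose k : ℤ) * (1 + Stmt19Aux.rr k - Stmt19Aux.ss k) := by
      rw [Finset.mul_sum]
      refine Finset.sum_congr rfl fun k _ => ?_
      have h4 : k % 4 = 0 ∨ k % 4 = 1 ∨ k % 4 = 2 ∨ k % 4 = 3 := by omega
      unfold Stmt19Aux.rr Stmt19Aux.ss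
      rcases h4 with h | h | h | h <;> simp [h] <;> ring
    have h5 : ∑ k ∈ Finset.range (4 * m + 2 + 1),
          ((4 * m + 2).choose k : ℤ) * (1 + Stmt19Aux.rr k - Stmt19Aux.ss k)
        = (∑ k ∈ Finset.range (4 * m + 2 + 1), ((4 * m + 2).choose k : ℤ))
          + (∑ k ∈ Finset.range (4 * m + 2 + 1), ((4 * m + 2).choose k : ℤ) * Stmt19Aux.rr k)
          - (∑ k ∈ Finset.range (4 * m + 2 + 1), ((4 * m + 2).choose k : ℤ) * Stmt19Aux.ss k) := by
      rw [← Finset.sum_add_distrib, ← Finset.sum_sub_distrib]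
      refine Finset.sum_congr rfl fun k _ => by ring
    have h6 : ∑ k ∈ Finset.range (4 * m + 2 + 1), ((4 * m + 2).choose k : ℤ)
        = 2 ^ (4 * m + 2) := by
      have := Nat.sum_range_choose (4 * m + 2)
      exact_mod_cast congrArg (Nat.cast : ℕ → ℤ) this
    have h7 := Stmt19Aux.sum_rr (4 * m + 2)
    have h8 := Stmt19Aux.sum_ss (4 * m + 2)
    rw [Stmt19Aux.key_re m] at h7
    rw [Stmt19Aux.key_im m] at h8
    have h9 : (2 : ℤ) * ((Finset.univ.filter (fun v : Fin (4 * m + 2) → ZMod 2 =>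
        hammingNorm v % 4 = 0 ∨ hammingNorm v % 4 = 3)).card : ℤ)
        = 2 ^ (4 * m + 2) + 0 - (-1) ^ m * 2 ^ (2 * m + 1) := by
      rw [h2, h3, h5, h6, h7, h8]
    have h10 : (2 : ℤ) * (2 ^ (4 * m + 1) - (-1) ^ m * 2 ^ (2 * m))
        = 2 ^ (4 * m + 2) + 0 - (-1) ^ m * 2 ^ (2 * m + 1) := by ring
    linarith
  rw [hcount]
  norm_num
end
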